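/- In 2-neighbour bootstrap percolation on [n]^2, for any percolating set A of size exactly n, every vertex that becomes infected after time 0 becomes infected by virtue of exactly 2 infected neighbours, and no two adjacent vertices become infected at the same time step unless one of them is a corner. -/

import Mathlib

/-- The grid `[n]^d = {1,...,n}^d`, embedded in `ℕ^d`. -/
def gridSet (n d : ℕ) : Set (Fin d → ℕ) := {v | ∀ i, 1 ≤ v i ∧ v i ≤ n}

/-- Adjacency: differ by 1 in exactly one coordinate. -/
def gridAdj {d : ℕ} (u v : Fin d → ℕ) : Prop :=
  ∃ j, (u j = v j + 1 ∨ v j = u j + 1) ∧ ∀ i, i ≠ j → u i = v i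

/-- One round of `r`-neighbour bootstrap percolation on `[n]^d`. -/
def bpStep (n d r : ℕ) (S : Set (Fin d → ℕ)) : Set (Fin d → ℕ) :=
  S ∪ {v ∈ gridSet n d | r ≤ {u ∈ S | gridAdj u v}.ncard}

/-- Infected set after `t` rounds, starting from `A`. -/
def infected (n d r : ℕ) (A : Set (Fin d → ℕ)) (t : ℕ) : Set (Fin d → ℕ) :=
  (bpStep n d r)^[t] A

/-- The closure of `A`: all eventually infected vertices. -/
def bpClosure (n d r : ℕ) (A : Set (Fin d → ℕ)) : Set (Fin d → ℕ) :=
  ⋃ t, infected n d r A t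

/-- `A` percolates if every grid vertex is eventually infected. -/
def percolates (n d r : ℕ) (A : Set (Fin d → ℕ)) : Prop :=
  gridSet n d ⊆ bpClosure n d r A

/-- Percolation time: least `t` with the whole grid infected. -/
noncomputable def percTime (n d r : ℕ) (A : Set (Fin d → ℕ)) : ℕ :=
  sInf {t | gridSet n d ⊆ infected n d r A t}

/-- `V_k`: grid vertices of coordinate sum `k`. -/
def hyperplane (n d k : ℕ) : Set (Fin d → ℕ) := {v ∈ gridSet n d | ∑ i, v i = k}

/-- The "cyclic combination" set `A = ⋃_{i=1}^d V_{in}`. -/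
def diagUnion (n d : ℕ) : Set (Fin d → ℕ) :=
  ⋃ i ∈ Finset.Icc 1 d, hyperplane n d (i * n)

/-- A corner of the grid `[n]^2`. -/
def isCorner (n : ℕ) (v : Fin 2 → ℕ) : Prop :=
  (v 0 = 1 ∨ v 0 = n) ∧ (v 1 = 1 ∨ v 1 = n)

/-!
Perimeter argument. Let `perim S` count the grid edges leaving a finite set of cells `S`. When a
set `N` of new cells joins `S`,
`perim (S ∪ N) = perim S + 4 |N| - 2 ∑_{v ∈ N} deg_S v - ∑_{v ∈ N} deg_N v`,
so, as every newly infected vertex has at least two infected neighbours, the perimeter never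
increases. It starts at most `4 |A| = 4n` and ends at `perim [n]^2 = 4n`, hence it is constant;
equality in every step forces each new vertex to have exactly two infected neighbours and no newly
infected neighbour.
-/
open Finset
open scoped Classical

section Grid

variable {n d r : ℕ} {A : Set (Fin d → ℕ)}

noncomputable def gridFinset (n d : ℕ) : Finset (Fin d → ℕ) :=
  Fintype.piFinset fun _ => Icc 1 n

lemma coe_gridFinset : (gridFinset n d : Set (Fin d → ℕ)) = gridSet n d := by
  ext v
  simp [gridFinset, gridSet, Pi.le_def, forall_and]

lemma gridAdj_comm {u v : Fin d → ℕ} : gridAdj u v ↔ gridAdj v u := by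
  unfold gridAdj
  simp only [eq_comm, or_comm]

lemma infected_succ (t : ℕ) : infected n d r A (t + 1) = bpStep n d r (infected n d r A t) :=
  Function.iterate_succ_apply' _ _ _

lemma infected_monotone : Monotone (infected n d r A) :=
  monotone_nat_of_le_succ fun t => by rw [infected_succ]; exact Set.subset_union_left

lemma infected_subset_gridSet (hA : A ⊆ gridSet n d) (t : ℕ) :
    infected n d r A t ⊆ gridSet n d := by
  induction t with
  | zero => exact hA
  | succ t ih =>
    rw [infected_succ]
    exact Set.union_subset ih (Set.sep_subset _ _)

lemma exists_gridSet_subset_infected (hperc : percolates n d r A) :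
    ∃ T, gridSet n d ⊆ infected n d r A T := by
  rw [percolates, bpClosure, ← coe_gridFinset] at hperc
  rw [← coe_gridFinset]
  exact infected_monotone.directed_le.exists_mem_subset_of_finset_subset_biUnion hperc

noncomputable def degIn (T : Finset (Fin d → ℕ)) (v : Fin d → ℕ) : ℕ :=
  #{u ∈ T | gridAdj u v}

lemma degIn_union {S T : Finset (Fin d → ℕ)} (h : Disjoint S T) (v : Fin d → ℕ) :
    degIn (S ∪ T) v = degIn S v + degIn T v := by
  rw [degIn, filter_union, card_union_of_disjoint (disjoint_filter_filter h)]
  rfl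

lemma sum_degIn_comm (S T : Finset (Fin d → ℕ)) :
    ∑ v ∈ S, degIn T v = ∑ v ∈ T, degIn S v := by
  simpa [degIn, bipartiteAbove, bipartiteBelow, gridAdj_comm] using
    sum_card_bipartiteAbove_eq_sum_card_bipartiteBelow (s := S) (t := T) (fun v u => gridAdj u v)

end Grid

section Square

-- If a coordinate of `v` is `0`, natural subtraction turns one of these cells into `v` itself.
def nbr (v : Fin 2 → ℕ) : Finset (Fin 2 → ℕ) :=
  {![v 0 + 1, v 1], ![v 0 - 1, v 1], ![v 0, v 1 + 1], ![v 0, v 1 - 1]}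

lemma gridAdj_iff_mem_nbr {u v : Fin 2 → ℕ} (hv : ∀ i, 1 ≤ v i) : gridAdj u v ↔ u ∈ nbr v := by
  have := hv 0
  have := hv 1
  simp only [gridAdj, nbr, Fin.exists_fin_two, Fin.forall_fin_two, mem_insert, mem_singleton,
    funext_iff, Matrix.cons_val_zero, Matrix.cons_val_one]
  omega

lemma sum_nbr {v : Fin 2 → ℕ} (hv : ∀ i, 1 ≤ v i) (g : (Fin 2 → ℕ) → ℕ) :
    ∑ u ∈ nbr v, g u =
      g ![v 0 + 1, v 1] + g ![v 0 - 1, v 1] + g ![v 0, v 1 + 1] + g ![v 0, v 1 - 1] := by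
  have := hv 0
  have := hv 1
  rw [nbr, sum_insert, sum_insert, sum_insert, sum_singleton, add_assoc, add_assoc] <;>
  simp only [mem_insert, mem_singleton, funext_iff, Fin.forall_fin_two, Matrix.cons_val_zero,
    Matrix.cons_val_one] <;> omega

lemma card_nbr {v : Fin 2 → ℕ} (hv : ∀ i, 1 ≤ v i) : #(nbr v) = 4 := by
  rw [card_eq_sum_ones, sum_nbr hv]

lemma filter_gridAdj_eq_nbr_inter {v : Fin 2 → ℕ} (hv : ∀ i, 1 ≤ v i) (T : Finset (Fin 2 → ℕ)) :
    {u ∈ T | gridAdj u v} = nbr v ∩ T := by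
  ext u
  rw [mem_filter, mem_inter, gridAdj_iff_mem_nbr hv, and_comm]

noncomputable def perim (S : Finset (Fin 2 → ℕ)) : ℕ :=
  ∑ v ∈ S, #(nbr v \ S)

variable {S N : Finset (Fin 2 → ℕ)}

lemma perim_add_sum_degIn (hS : ∀ v ∈ S, ∀ i, 1 ≤ v i) :
    perim S + ∑ v ∈ S, degIn S v = 4 * #S := by
  rw [perim, ← sum_add_distrib, mul_comm, ← smul_eq_mul, ← sum_const]
  refine sum_congr rfl fun v hv => ?_
  rw [degIn, filter_gridAdj_eq_nbr_inter (hS v hv), card_sdiff_add_card_inter, card_nbr (hS v hv)]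

lemma perim_le_four_mul_card (hS : ∀ v ∈ S, ∀ i, 1 ≤ v i) :
    perim S ≤ 4 * #S := by
  rw [← perim_add_sum_degIn hS]
  exact Nat.le_add_right _ _

lemma perim_union_add (hd : Disjoint S N) (hS : ∀ v ∈ S, ∀ i, 1 ≤ v i)
    (hN : ∀ v ∈ N, ∀ i, 1 ≤ v i) :
    perim (S ∪ N) + (2 * ∑ v ∈ N, degIn S v + ∑ v ∈ N, degIn N v) = perim S + 4 * #N := by
  have hSN := perim_add_sum_degIn (S := S ∪ N) fun v hv => (mem_union.1 hv).elim (hS v) (hN v)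
  have hS' := perim_add_sum_degIn hS
  rw [sum_union hd, card_union_of_disjoint hd] at hSN
  simp only [degIn_union hd, sum_add_distrib, sum_degIn_comm S N] at hSN
  omega

lemma perim_union_le (hd : Disjoint S N) (hS : ∀ v ∈ S, ∀ i, 1 ≤ v i)
    (hN : ∀ v ∈ N, ∀ i, 1 ≤ v i) (h2 : ∀ v ∈ N, 2 ≤ degIn S v) :
    perim (S ∪ N) ≤ perim S := by
  have := perim_union_add hd hS hN
  have := card_nsmul_le_sum N (fun v => degIn S v) 2 h2
  rw [smul_eq_mul] at this
  omega

lemma degIn_eq_of_perim_le_perim_union (hd : Disjoint S N) (hS : ∀ v ∈ S, ∀ i, 1 ≤ v i)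
    (hN : ∀ v ∈ N, ∀ i, 1 ≤ v i) (h2 : ∀ v ∈ N, 2 ≤ degIn S v)
    (hperim : perim S ≤ perim (S ∪ N)) :
    ∀ v ∈ N, degIn S v = 2 ∧ degIn N v = 0 := by
  have hsum := perim_union_add hd hS hN
  have h2N := card_nsmul_le_sum N (fun v => degIn S v) 2 h2
  rw [smul_eq_mul] at h2N
  have hS2 : ∑ _v ∈ N, 2 = ∑ v ∈ N, degIn S v := by rw [sum_const, smul_eq_mul]; omega
  have hN0 : ∑ v ∈ N, degIn N v = 0 := by omega
  intro v hv
  exact ⟨((sum_eq_sum_iff_of_le h2).1 hS2 v hv).symm, (sum_eq_zero_iff.1 hN0) v hv⟩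

lemma mem_gridFinset_two {n : ℕ} {v : Fin 2 → ℕ} :
    v ∈ gridFinset n 2 ↔ (1 ≤ v 0 ∧ v 0 ≤ n) ∧ (1 ≤ v 1 ∧ v 1 ≤ n) := by
  rw [← mem_coe, coe_gridFinset, gridSet, Set.mem_ofPred_eq, Fin.forall_fin_two]

lemma card_nbr_sdiff_gridFinset {n : ℕ} {v : Fin 2 → ℕ} (hv : v ∈ gridFinset n 2) :
    #(nbr v \ gridFinset n 2) = (if v 0 = n then 1 else 0) + (if v 0 = 1 then 1 else 0) +
      (if v 1 = n then 1 else 0) + (if v 1 = 1 then 1 else 0) := by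
  rw [mem_gridFinset_two] at hv
  rw [sdiff_eq_filter, card_filter, sum_nbr fun i => by fin_cases i <;> simp [hv]]
  simp only [mem_gridFinset_two, Matrix.cons_val_zero, Matrix.cons_val_one]
  split_ifs <;> omega

lemma card_filter_gridFinset_coord_eq {n c : ℕ} (hc : c ∈ Icc 1 n) (i : Fin 2) :
    #{v ∈ gridFinset n 2 | v i = c} = n := by
  rw [gridFinset, Fintype.card_filter_piFinset_const_eq_of_mem _ _ hc]
  simp

lemma perim_gridFinset (n : ℕ) : perim (gridFinset n 2) = 4 * n := by
  rcases Nat.eq_zero_or_pos n with rfl | hn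
  · simp [perim, gridFinset]
  have hcard {c : ℕ} (i : Fin 2) (hc : c = 1 ∨ c = n) := card_filter_gridFinset_coord_eq
    (mem_Icc.2 (by omega : 1 ≤ c ∧ c ≤ n)) i
  rw [perim, sum_congr rfl fun v hv => card_nbr_sdiff_gridFinset hv]
  simp only [sum_add_distrib, sum_boole, Nat.cast_id]
  rw [hcard 0 (.inr rfl), hcard 0 (.inl rfl), hcard 1 (.inr rfl), hcard 1 (.inl rfl)]
  ring

end Square

section Infected

variable {n d r : ℕ} {A : Set (Fin d → ℕ)}

noncomputable def infectedFinset (n d r : ℕ) (A : Set (Fin d → ℕ)) (t : ℕ) :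
    Finset (Fin d → ℕ) :=
  {v ∈ gridFinset n d | v ∈ infected n d r A t}

lemma coe_infectedFinset (hA : A ⊆ gridSet n d) (t : ℕ) :
    (infectedFinset n d r A t : Set (Fin d → ℕ)) = infected n d r A t := by
  ext v
  rw [mem_coe, infectedFinset, mem_filter, ← mem_coe, coe_gridFinset]
  exact and_iff_right_of_imp fun hv => infected_subset_gridSet hA t hv

lemma mem_infectedFinset (hA : A ⊆ gridSet n d) {t : ℕ} {v : Fin d → ℕ} :
    v ∈ infectedFinset n d r A t ↔ v ∈ infected n d r A t := by
  rw [← mem_coe, coe_infectedFinset hA]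

lemma one_le_of_mem_infectedFinset {t : ℕ} {v : Fin d → ℕ} (hv : v ∈ infectedFinset n d r A t)
    (i : Fin d) : 1 ≤ v i := by
  have hv : v ∈ gridSet n d := by rw [← coe_gridFinset]; exact (mem_filter.1 hv).1
  exact (hv i).1

lemma infectedFinset_monotone (hA : A ⊆ gridSet n d) : Monotone (infectedFinset n d r A) :=
  fun _ _ hst => by
    rw [← coe_subset, coe_infectedFinset hA, coe_infectedFinset hA]
    exact infected_monotone hst

lemma ncard_adj_infected_eq_degIn (hA : A ⊆ gridSet n d) (t : ℕ) (v : Fin d → ℕ) :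
    {u ∈ infected n d r A t | gridAdj u v}.ncard = degIn (infectedFinset n d r A t) v := by
  rw [degIn, ← Set.ncard_coe_finset, coe_filter]
  simp_rw [mem_infectedFinset hA]

lemma le_degIn_of_mem_sdiff (hA : A ⊆ gridSet n d) {t : ℕ} {v : Fin d → ℕ}
    (hv : v ∈ infectedFinset n d r A (t + 1) \ infectedFinset n d r A t) :
    r ≤ degIn (infectedFinset n d r A t) v := by
  rw [mem_sdiff, mem_infectedFinset hA, mem_infectedFinset hA, infected_succ] at hv
  obtain ⟨hv | hv, hv0⟩ := hv
  · exact absurd hv hv0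
  · rw [← ncard_adj_infected_eq_degIn hA]
    exact hv.2

end Infected

section SquareInfected

variable {n r : ℕ} {A : Set (Fin 2 → ℕ)}

lemma perim_infectedFinset_antitone (hA : A ⊆ gridSet n 2) (hr : 2 ≤ r) :
    Antitone fun t => perim (infectedFinset n 2 r A t) :=
  antitone_nat_of_succ_le fun t => by
    have := perim_union_le (S := infectedFinset n 2 r A t)
      (N := infectedFinset n 2 r A (t + 1) \ infectedFinset n 2 r A t) disjoint_sdiff
      (fun v => one_le_of_mem_infectedFinset)
      (fun v hv => one_le_of_mem_infectedFinset (mem_sdiff.1 hv).1)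
      (fun v hv => hr.trans (le_degIn_of_mem_sdiff hA hv))
    rwa [union_sdiff_of_subset (infectedFinset_monotone hA t.le_succ)] at this

lemma perim_infectedFinset_eq (hA : A ⊆ gridSet n 2) (hr : 2 ≤ r) (hperc : percolates n 2 r A)
    (hcard : A.ncard = n) (t : ℕ) : perim (infectedFinset n 2 r A t) = 4 * n := by
  obtain ⟨T, hT⟩ := exists_gridSet_subset_infected hperc
  have hfull : infectedFinset n 2 r A (max t T) = gridFinset n 2 := by
    refine (filter_subset _ _).antisymm fun v hv => mem_filter.2 ⟨hv, ?_⟩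
    exact infected_monotone (le_max_right t T) (hT (by rwa [← coe_gridFinset]))
  have hstart : perim (infectedFinset n 2 r A 0) ≤ 4 * n :=
    calc perim (infectedFinset n 2 r A 0)
      _ ≤ 4 * #(infectedFinset n 2 r A 0) :=
        perim_le_four_mul_card fun v => one_le_of_mem_infectedFinset
      _ = 4 * n := by
        rw [← Set.ncard_coe_finset, coe_infectedFinset hA]
        exact congrArg (4 * ·) hcard
  have hdown := perim_infectedFinset_antitone hA hr (Nat.zero_le t)
  have hup := perim_infectedFinset_antitone hA hr (le_max_left t T)
  dsimp only at hdown hup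
  rw [hfull, perim_gridFinset] at hup
  omega

lemma degIn_eq_of_mem_sdiff_infectedFinset (hA : A ⊆ gridSet n 2) (hperc : percolates n 2 2 A)
    (hcard : A.ncard = n) {t : ℕ} {v : Fin 2 → ℕ}
    (hv : v ∈ infectedFinset n 2 2 A (t + 1) \ infectedFinset n 2 2 A t) :
    degIn (infectedFinset n 2 2 A t) v = 2 ∧
      degIn (infectedFinset n 2 2 A (t + 1) \ infectedFinset n 2 2 A t) v = 0 := by
  refine degIn_eq_of_perim_le_perim_union disjoint_sdiff (fun v => one_le_of_mem_infectedFinset)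
    (fun v hv => one_le_of_mem_infectedFinset (mem_sdiff.1 hv).1)
    (fun v hv => le_degIn_of_mem_sdiff hA hv) ?_ v hv
  rw [union_sdiff_of_subset (infectedFinset_monotone hA t.le_succ),
    perim_infectedFinset_eq hA le_rfl hperc hcard, perim_infectedFinset_eq hA le_rfl hperc hcard]

end SquareInfected

theorem tight_growth_dim_two_general (n : ℕ) (A : Set (Fin 2 → ℕ))
    (hA : A ⊆ gridSet n 2) (hperc : percolates n 2 2 A) (hcard : A.ncard = n) :
    (∀ (t : ℕ) (v : Fin 2 → ℕ), v ∈ infected n 2 2 A (t + 1) → v ∉ infected n 2 2 A t →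
      {u ∈ infected n 2 2 A t | gridAdj u v}.ncard = 2) ∧
    (∀ (t : ℕ) (u v : Fin 2 → ℕ), gridAdj u v →
      u ∈ infected n 2 2 A (t + 1) → u ∉ infected n 2 2 A t →
      v ∈ infected n 2 2 A (t + 1) → v ∉ infected n 2 2 A t →
      isCorner n u ∨ isCorner n v) := by
  have mem_new {t : ℕ} {v : Fin 2 → ℕ} (h1 : v ∈ infected n 2 2 A (t + 1))
      (h0 : v ∉ infected n 2 2 A t) :
      v ∈ infectedFinset n 2 2 A (t + 1) \ infectedFinset n 2 2 A t := by
    rw [mem_sdiff, mem_infectedFinset hA, mem_infectedFinset hA]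
    exact ⟨h1, h0⟩
  refine ⟨fun t v hv1 hv0 => ?_, fun t u v huv hu1 hu0 hv1 hv0 => ?_⟩
  · rw [ncard_adj_infected_eq_degIn hA]
    exact (degIn_eq_of_mem_sdiff_infectedFinset hA hperc hcard (mem_new hv1 hv0)).1
  · have hv := (degIn_eq_of_mem_sdiff_infectedFinset hA hperc hcard (mem_new hv1 hv0)).2
    rw [degIn, card_eq_zero, filter_eq_empty_iff] at hv
    exact absurd huv (hv (mem_new hu1 hu0))

theorem tight_growth_dim_two (n : ℕ) (hn : 1 ≤ n) (A : Set (Fin 2 → ℕ))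
    (hA : A ⊆ gridSet n 2) (hperc : percolates n 2 2 A) (hcard : A.ncard = n) :
    (∀ (t : ℕ) (v : Fin 2 → ℕ), v ∈ infected n 2 2 A (t + 1) → v ∉ infected n 2 2 A t →
      {u ∈ infected n 2 2 A t | gridAdj u v}.ncard = 2) ∧
    (∀ (t : ℕ) (u v : Fin 2 → ℕ), gridAdj u v →
      u ∈ infected n 2 2 A (t + 1) → u ∉ infected n 2 2 A t →
      v ∈ infected n 2 2 A (t + 1) → v ∉ infected n 2 2 A t →
      isCorner n u ∨ isCorner n v) :=
  tight_growth_dim_two_general n A hA hperc hcard
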